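/- For any Boolean network f and Boolean configurations x, y, if (x,y) ∈ ga(f) then (x,y) ∈ mp(f); that is, every generalised asynchronous update is reproducible under the most permissive semantics. The update can be simulated by first moving every variable in Δ(x,y) to the appropriate transient value and then collapsing each to its target Boolean value. -/

import Mathlib

open Relation Filter

/-! ### Boolean networks and their semantics -/

abbrev Config (n : ℕ) := Fin n → Bool
abbrev BN (n : ℕ) := Config n → Fin n → Bool

def Delta {n : ℕ} (x y : Config n) : Set (Fin n) := {i | x i ≠ y i}

def fa {n : ℕ} (f : BN n) (x y : Config n) : Prop :=
  ∃ i, Delta x y = {i} ∧ f x i = y i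

def syn {n : ℕ} (f : BN n) (x y : Config n) : Prop := ∀ i, f x i = y i

def ga {n : ℕ} (f : BN n) (x y : Config n) : Prop := ∀ i ∈ Delta x y, f x i = y i

/-! ### Most permissive semantics -/

inductive MPV where
  | b : Bool → MPV
  | up : MPV
  | down : MPV
deriving DecidableEq

abbrev MPConfig (n : ℕ) := Fin n → MPV

def toMP {n : ℕ} (x : Config n) : MPConfig n := fun i => .b (x i)

def beta {n : ℕ} (xh : MPConfig n) : Set (Config n) :=
  {x | ∀ i v, xh i = .b v → x i = v}

def mpStep {n : ℕ} (f : BN n) (xh yh : MPConfig n) : Prop :=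
  ∃ i, (∀ j, j ≠ i → xh j = yh j) ∧ xh i ≠ yh i ∧
    ((xh i = .up ∧ yh i = .b true) ∨
     (xh i = .down ∧ yh i = .b false) ∨
     (xh i ≠ .b true ∧ yh i = .up ∧ ∃ x ∈ beta xh, f x i = true) ∨
     (xh i ≠ .b false ∧ yh i = .down ∧ ∃ x ∈ beta xh, f x i = false))

def mp {n : ℕ} (f : BN n) (x y : Config n) : Prop :=
  ReflTransGen (mpStep f) (toMP x) (toMP y)

/-! ### Petri nets (discrete and continuous) -/

structure Net (P T : Type) where
  wPT : P → T → ℕ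
  wTP : T → P → ℕ

def dfire {P T : Type} (N : Net P T) (t : T) (M M' : P → ℕ) : Prop :=
  (∀ p, N.wPT p t ≤ M p) ∧ ∀ p, M' p = M p - N.wPT p t + N.wTP t p

def dReach {P T : Type} (N : Net P T) : (P → ℕ) → (P → ℕ) → Prop :=
  ReflTransGen (fun M M' => ∃ t, dfire N t M M')

def cfire {P T : Type} (N : Net P T) (t : T) (α : ℝ) (m m' : P → ℝ) : Prop :=
  0 ≤ α ∧ (∀ p, α * N.wPT p t ≤ m p) ∧
    ∀ p, m' p = m p - α * N.wPT p t + α * N.wTP t p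

def cReach {P T : Type} (N : Net P T) : (P → ℝ) → (P → ℝ) → Prop :=
  ReflTransGen (fun m m' => ∃ t α, cfire N t α m m')

def limReach {P T : Type} (N : Net P T) (m m' : P → ℝ) : Prop :=
  ∃ ms : ℕ → P → ℝ, ms 0 = m ∧
    (∀ k, ∃ t α, cfire N t α (ms k) (ms (k+1))) ∧
    Tendsto ms atTop (nhds m')

def IsTrap {P T : Type} (N : Net P T) (S : Set P) : Prop :=
  ∀ t, (∃ p ∈ S, 0 < N.wPT p t) → ∃ p ∈ S, 0 < N.wTP t p

def enabPos {P T : Type} (N : Net P T) (t : T) (m : P → ℝ) : Prop :=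
  ∀ p, 0 < N.wPT p t → 0 < m p

def enabGe {P T : Type} (N : Net P T) (t : T) (m : P → ℝ) (c : ℝ) : Prop :=
  ∀ p, 0 < N.wPT p t → c * N.wPT p t ≤ m p

/-! ### Petri net encoding of Boolean networks -/

abbrev Clause (n : ℕ) := Fin n → Option Bool

def satC {n : ℕ} (z : Config n) (C : Clause n) : Prop :=
  ∀ j v, C j = some v → z j = v

structure ETrans (n : ℕ) where
  i : Fin n
  s : Bool
  C : Clause n

abbrev EPlace (n : ℕ) := Fin n × Bool

def encNet (n : ℕ) : Net (EPlace n) (ETrans n) where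
  wPT := fun p t =>
    if p.1 = t.i then (if p.2 = !t.s then 1 else 0)
    else (if t.C p.1 = some p.2 then 1 else 0)
  wTP := fun t p =>
    if p.1 = t.i then (if p.2 = t.s then 1 else 0)
    else (if t.C p.1 = some p.2 then 1 else 0)

def mu {n : ℕ} (xh : MPConfig n) : Set (EPlace n → ℝ) :=
  {m | (∀ p, 0 ≤ m p) ∧ ∀ i,
    m (i, false) + m (i, true) = 1 ∧
    (∀ v, xh i = .b v → m (i, v) = 1) ∧
    ((xh i = .up ∨ xh i = .down) →
      0 < m (i, false) ∧ m (i, false) < 1 ∧ 0 < m (i, true) ∧ m (i, true) < 1)}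

noncomputable def canon {n : ℕ} (xh : MPConfig n) : EPlace n → ℝ := fun p =>
  match xh p.1 with
  | .b v => if p.2 = v then 1 else 0
  | _ => 1/2

def validT {n : ℕ} (D : Fin n → Bool → Set (Clause n)) (t : ETrans n) : Prop :=
  t.C ∈ D t.i t.s

def IsDNF {n : ℕ} (f : BN n) (D : Fin n → Bool → Set (Clause n)) : Prop :=
  (∀ i s z, (∃ C ∈ D i s, satC z C) ↔ (z i = !s ∧ f z i = s)) ∧
  (∀ i s C, C ∈ D i s → C i = some (!s))

def cReachG {P T : Type} (N : Net P T) (good : T → Prop) :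
    (P → ℝ) → (P → ℝ) → Prop :=
  ReflTransGen (fun m m' => ∃ t, good t ∧ ∃ α, cfire N t α m m')

def climReachG {P T : Type} (N : Net P T) (good : T → Prop) (m m' : P → ℝ) : Prop :=
  ∃ ms : ℕ → P → ℝ, ms 0 = m ∧
    (∀ k, ∃ t, good t ∧ ∃ α, cfire N t α (ms k) (ms (k+1))) ∧
    Tendsto ms atTop (nhds m')

/-!
Let `D = Δ(x, y)`. Since `f x i = y i` for every `i ∈ D`, and `x` stays compatible with the
configuration as long as only the coordinates in `D` have been made transient, each `i ∈ D` can in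
turn be raised to the transient value pointing towards `y i`. Afterwards each of them collapses to
`y i`, and outside `D` the configurations `x` and `y` already agree.
-/

section piecewise

variable {ι α : Type*} [DecidableEq ι] {r : (ι → α) → (ι → α) → Prop}

theorem reflTransGen_piecewise (g z : ι → α) (S : Finset ι)
    (hstep : ∀ s ⊆ S, ∀ i ∈ S, i ∉ s →
      r (s.piecewise g z) (Function.update (s.piecewise g z) i (g i))) :
    ReflTransGen r z (S.piecewise g z) := by
  suffices ∀ s ⊆ S, ReflTransGen r z (s.piecewise g z) from this S subset_rfl
  intro s
  induction s using Finset.induction_on with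
  | empty =>
    intro _
    rw [Finset.piecewise_empty]
  | insert i s hi ih =>
    intro hsub
    have hs : s ⊆ S := (Finset.subset_insert i s).trans hsub
    rw [Finset.piecewise_insert]
    exact (ih hs).tail (hstep s hs i (hsub (Finset.mem_insert_self i s)) hi)

end piecewise

def MPV.transient : Bool → MPV
  | true => .up
  | false => .down

theorem MPV.transient_ne_b (v w : Bool) : MPV.transient v ≠ .b w := by
  cases v <;> simp [MPV.transient]

section mpStep

variable {n : ℕ} {f : BN n} {xh : MPConfig n} {i : Fin n} {v : Bool}

theorem mpStep_update_transient {x : Config n} (hi : xh i = .b (!v)) (hx : x ∈ beta xh)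
    (hf : f x i = v) : mpStep f xh (Function.update xh i (MPV.transient v)) := by
  refine ⟨i, fun j hj => (Function.update_of_ne hj _ _).symm, ?_, ?_⟩ <;>
    cases v <;> simp_all [MPV.transient] <;> exact ⟨x, hx, hf⟩

theorem mpStep_update_collapse (hi : xh i = MPV.transient v) :
    mpStep f xh (Function.update xh i (.b v)) := by
  refine ⟨i, fun j hj => (Function.update_of_ne hj _ _).symm, ?_, ?_⟩ <;>
    cases v <;> simp_all [MPV.transient]

end mpStep

theorem mem_beta_piecewise_transient {n : ℕ} (x y : Config n) (s : Finset (Fin n)) :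
    x ∈ beta (s.piecewise (fun i => MPV.transient (y i)) (toMP x)) := by
  intro i v hv
  by_cases hi : i ∈ s
  · simp [Finset.piecewise_eq_of_mem _ _ _ hi, MPV.transient_ne_b] at hv
  · simpa [Finset.piecewise_eq_of_notMem _ _ _ hi, toMP] using hv

/-- every generalised asynchronous update is reproducible
under the most permissive semantics. -/
theorem ga_subset_mp {n : ℕ} (f : BN n) (x y : Config n) :
    ga f x y → mp f x y := by
  intro hga
  set D := Finset.univ.filter fun i => x i ≠ y i
  set raised := D.piecewise (fun i => MPV.transient (y i)) (toMP x)
  have raise : ReflTransGen (mpStep f) (toMP x) raised := by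
    refine reflTransGen_piecewise _ _ _ fun s _ i hiD his => mpStep_update_transient ?_
      (mem_beta_piecewise_transient x y s) (hga i (Finset.mem_filter.1 hiD).2)
    have hxy : x i = !y i := Bool.eq_not_iff.2 (Finset.mem_filter.1 hiD).2
    simp [Finset.piecewise_eq_of_notMem _ _ _ his, toMP, hxy]
  have collapse : ReflTransGen (mpStep f) raised (D.piecewise (toMP y) raised) :=
    reflTransGen_piecewise _ _ _ fun s _ i hiD his => mpStep_update_collapse <| by
      simp [Finset.piecewise_eq_of_notMem _ _ _ his, raised, Finset.piecewise_eq_of_mem _ _ _ hiD]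
  have settled : D.piecewise (toMP y) raised = toMP y := by
    ext i : 1
    by_cases hiD : i ∈ D
    · simp [Finset.piecewise_eq_of_mem _ _ _ hiD]
    · simp_all [raised, D, toMP]
  unfold mp
  rw [← settled]
  exact raise.trans collapse
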